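/- arXiv:2203.11526 — 5 statements merged into one kernel-verified Lean document; each statement's English description precedes it below -/
import Mathlib

section
/- Almost surely, for every K with 1 ≤ K < N one has μ̂^B_{a_K*} ≥ μ̂^B_{a_{K+1}*}; that is, the value of μ̂^B at the index selected by maximizing μ̂^A over the top-K candidate set of μ̂^B is pointwise monotonically nonincreasing as the number of candidates K increases. -/
open MeasureTheory ProbabilityTheory Finset

noncomputable section

/-- The (random) set `M_K` of indices whose `B`-value is among the `K` largest values
among `B 1 ω, …, B N ω`: an index belongs to it iff fewer than `K` indices have a
strictly larger `B`-value. -/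
def topK {Ω : Type*} {N : ℕ} (B : Fin N → Ω → ℝ) (K : ℕ) (ω : Ω) : Finset (Fin N) :=
  Finset.univ.filter fun i => (Finset.univ.filter fun j => B i ω < B j ω).card < K

/-- An element of the finite set `s` at which `f` is maximal over `s`. -/
def argmaxOn {α : Type*} [Nonempty α] (f : α → ℝ) (s : Finset α) : α :=
  if h : s.Nonempty then (s.exists_max_image f h).choose else Classical.arbitrary α

/-- `a_K*`: the index of `M_K` at which `i ↦ A i ω` is maximal over `M_K`. -/
def aK {Ω : Type*} {N : ℕ} [NeZero N] (A B : Fin N → Ω → ℝ) (K : ℕ) (ω : Ω) : Fin N :=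
  argmaxOn (fun i => A i ω) (topK B K ω)

/-- `a*`: the index at which `i ↦ A i ω` is maximal over all indices. -/
def aStar {Ω : Type*} {N : ℕ} [NeZero N] (A : Fin N → Ω → ℝ) (ω : Ω) : Fin N :=
  argmaxOn (fun i => A i ω) Finset.univ

/-- The pointwise maximum `max_{1 ≤ i ≤ N} C i ω` (e.g. the single estimator `μ̂*_SE`). -/
def maxOf {Ω : Type*} {N : ℕ} [NeZero N] (C : Fin N → Ω → ℝ) (ω : Ω) : ℝ :=
  Finset.univ.sup' Finset.univ_nonempty fun i => C i ω

/-- `a_(j)`: the index carrying the `j`-th largest value among `B 1 ω, …, B N ω`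
(exactly `j - 1` indices have a strictly larger value). -/
def rankIdx {Ω : Type*} {N : ℕ} [NeZero N] (B : Fin N → Ω → ℝ) (j : ℕ) (ω : Ω) : Fin N :=
  if h : ∃ i, (Finset.univ.filter fun k => B i ω < B k ω).card = j - 1 then h.choose
  else Classical.arbitrary (Fin N)

end

lemma argmaxOn_mem {α : Type*} [Nonempty α] (f : α → ℝ) (s : Finset α) (h : s.Nonempty) :
    argmaxOn f s ∈ s := by
  rw [argmaxOn, dif_pos h]
  exact (s.exists_max_image f h).choose_spec.1

lemma argmaxOn_le {α : Type*} [Nonempty α] (f : α → ℝ) (s : Finset α) (h : s.Nonempty)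
    {x : α} (hx : x ∈ s) : f x ≤ f (argmaxOn f s) := by
  rw [argmaxOn, dif_pos h]
  exact (s.exists_max_image f h).choose_spec.2 x hx

lemma topK_nonempty {Ω : Type*} {N : ℕ} [NeZero N] (B : Fin N → Ω → ℝ) {K : ℕ} (hK : 1 ≤ K)
    (ω : Ω) : (topK B K ω).Nonempty := by
  obtain ⟨i, -, hi⟩ := Finset.exists_max_image Finset.univ (fun j => B j ω)
    Finset.univ_nonempty
  refine ⟨i, ?_⟩
  simp only [topK, Finset.mem_filter, Finset.mem_univ, true_and]
  have : (Finset.univ.filter fun j => B i ω < B j ω) = ∅ := by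
    refine Finset.eq_empty_of_forall_notMem fun j hj => ?_
    simp only [Finset.mem_filter] at hj
    exact absurd (hi j (Finset.mem_univ j)) (not_le.mpr hj.2)
  rw [this]
  simp only [Finset.card_empty]; exact hK

lemma topK_mono {Ω : Type*} {N : ℕ} (B : Fin N → Ω → ℝ) {K : ℕ} (ω : Ω) :
    topK B K ω ⊆ topK B (K + 1) ω := by
  intro i hi
  simp only [topK, Finset.mem_filter, Finset.mem_univ, true_and] at *
  omega

theorem stmt0 {Ω : Type*} [MeasurableSpace Ω] (P : MeasureTheory.Measure Ω)
    [MeasureTheory.IsProbabilityMeasure P]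
    (N : ℕ) [NeZero N] (hN : 2 ≤ N)
    (A B C : Fin N → Ω → ℝ)
    (hAmeas : ∀ i, Measurable (A i)) (hBmeas : ∀ i, Measurable (B i))
    (hCmeas : ∀ i, Measurable (C i))
    (hAint : ∀ i, MeasureTheory.Integrable (A i) P)
    (hBint : ∀ i, MeasureTheory.Integrable (B i) P)
    (hCint : ∀ i, MeasureTheory.Integrable (C i) P)
    (hAdist : ∀ᵐ ω ∂P, Function.Injective fun i => A i ω)
    (hBdist : ∀ᵐ ω ∂P, Function.Injective fun i => B i ω)
    :
    ∀ᵐ ω ∂P, ∀ K, 1 ≤ K → K < N →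
      B (aK A B (K + 1) ω) ω ≤ B (aK A B K ω) ω := by
  filter_upwards [hAdist] with ω hA
  intro K hK _
  have hne : (topK B K ω).Nonempty := topK_nonempty B hK ω
  have hne' : (topK B (K + 1) ω).Nonempty := topK_nonempty B (by omega) ω
  set a := aK A B K ω with ha
  set a' := aK A B (K + 1) ω with ha'
  have haMem : a ∈ topK B K ω := by rw [ha, aK]; exact argmaxOn_mem _ _ hne
  have ha'Mem : a' ∈ topK B (K + 1) ω := by rw [ha', aK]; exact argmaxOn_mem _ _ hne'
  by_cases hcase : a' ∈ topK B K ω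
  · -- then A a' ≤ A a and A a ≤ A a', so a = a'
    have h1 : A a' ω ≤ A a ω := by
      rw [ha, aK]; exact argmaxOn_le (fun i => A i ω) _ hne hcase
    have h2 : A a ω ≤ A a' ω := by
      rw [ha', aK]; exact argmaxOn_le (fun i => A i ω) _ hne' (topK_mono B ω haMem)
    have : a = a' := hA (le_antisymm h2 h1)
    rw [this]
  · -- a' ∉ topK K means ≥ K indices beat it; a ∈ topK K means < K beat a
    simp only [topK, Finset.mem_filter, Finset.mem_univ, true_and, not_lt] at haMem hcase
    by_contra hlt
    push_neg at hlt
    have hsub : (Finset.univ.filter fun j => B a' ω < B j ω) ⊆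
        (Finset.univ.filter fun j => B a ω < B j ω) := by
      intro j hj
      simp only [Finset.mem_filter, Finset.mem_univ, true_and] at *
      exact lt_trans hlt hj
    have := Finset.card_le_card hsub
    omega
end

section
/- (Underestimation of the double estimator) Suppose additionally that the σ-algebra generated by (μ̂^A_1,…,μ̂^A_N) is independent of the σ-algebra generated by (μ̂^B_1,…,μ̂^B_N), and that E[μ̂^B_i] = μ_i for each i. Then E[μ̂*_DE] ≤ max_{1≤i≤N} μ_i; i.e., the double estimator underestimates the maximum expected value in expectation. -/
open MeasureTheory ProbabilityTheory Finset

lemma le_aStar {Ω : Type*} {N : ℕ} [NeZero N] (A : Fin N → Ω → ℝ) (ω : Ω) (j : Fin N) :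
    A j ω ≤ A (aStar A ω) ω := by
  have h : (Finset.univ : Finset (Fin N)).Nonempty := Finset.univ_nonempty
  have hs := (Finset.univ.exists_max_image (fun i => A i ω) h).choose_spec.2 j (Finset.mem_univ _)
  simpa [aStar, argmaxOn, dif_pos h] using hs

theorem stmt3 {Ω : Type*} [MeasurableSpace Ω] (P : MeasureTheory.Measure Ω)
    [MeasureTheory.IsProbabilityMeasure P]
    (N : ℕ) [NeZero N] (hN : 2 ≤ N)
    (A B C : Fin N → Ω → ℝ)
    (hAmeas : ∀ i, Measurable (A i)) (hBmeas : ∀ i, Measurable (B i))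
    (hCmeas : ∀ i, Measurable (C i))
    (hAint : ∀ i, MeasureTheory.Integrable (A i) P)
    (hBint : ∀ i, MeasureTheory.Integrable (B i) P)
    (hCint : ∀ i, MeasureTheory.Integrable (C i) P)
    (hAdist : ∀ᵐ ω ∂P, Function.Injective fun i => A i ω)
    (hBdist : ∀ᵐ ω ∂P, Function.Injective fun i => B i ω)
    (hindep : ProbabilityTheory.IndepFun (fun ω i => A i ω) (fun ω i => B i ω) P)
    (μ : Fin N → ℝ) (hmean : ∀ i, ∫ ω, B i ω ∂P = μ i) :
    ∫ ω, B (aStar A ω) ω ∂P ≤ Finset.univ.sup' Finset.univ_nonempty μ := by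
  set M : ℝ := Finset.univ.sup' Finset.univ_nonempty μ with hM
  set S : Fin N → Set (Fin N → ℝ) := fun i => {f | ∀ j, j ≠ i → f j < f i} with hSdef
  have hS : ∀ i, MeasurableSet (S i) := by
    intro i
    have : S i = ⋂ j, ⋂ (_ : j ≠ i), {f : Fin N → ℝ | f j < f i} := by
      ext f; simp [hSdef, Set.mem_iInter]
    rw [this]
    exact MeasurableSet.iInter fun j => MeasurableSet.iInter fun _ =>
      measurableSet_lt (measurable_pi_apply j) (measurable_pi_apply i)
  set vecA : Ω → Fin N → ℝ := fun ω i => A i ω with hvecAdef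
  have hvecA : Measurable vecA := measurable_pi_lambda _ hAmeas
  set t : Fin N → Set Ω := fun i => vecA ⁻¹' S i with htdef
  have ht : ∀ i, MeasurableSet (t i) := fun i => hvecA (hS i)
  have ht' : ∀ i ω, ω ∈ t i ↔ ∀ j, j ≠ i → A j ω < A i ω := fun i ω => Iff.rfl
  -- disjointness
  have hdisj : Pairwise (Function.onFun Disjoint t) := by
    intro i j hij
    simp only [Function.onFun]
    rw [Set.disjoint_left]
    intro ω hi hj
    exact lt_asymm ((ht' i ω).1 hi j (Ne.symm hij)) ((ht' j ω).1 hj i hij)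
  -- a.e. membership
  have hmem : ∀ᵐ ω ∂P, ω ∈ t (aStar A ω) := by
    filter_upwards [hAdist] with ω hinj
    intro j hj
    exact lt_of_le_of_ne (le_aStar A ω j) (fun h => hj (hinj h))
  -- pointwise identity a.e.
  have key : ∀ᵐ ω ∂P, B (aStar A ω) ω = ∑ i, (t i).indicator (B i) ω := by
    filter_upwards [hmem] with ω hω
    rw [Finset.sum_eq_single (aStar A ω)]
    · rw [Set.indicator_of_mem hω]
    · intro b _ hb
      apply Set.indicator_of_notMem
      intro hbmem
      exact lt_asymm ((ht' _ ω).1 hbmem _ (Ne.symm hb)) ((ht' _ ω).1 hω b hb)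
    · intro h; exact absurd (Finset.mem_univ _) h
  have hIndInt : ∀ i, Integrable ((t i).indicator (B i)) P :=
    fun i => (hBint i).indicator (ht i)
  have hmul : ∀ i, ∫ ω, (t i).indicator (B i) ω ∂P = (P (t i)).toReal * μ i := by
    intro i
    have hXY : IndepFun (fun ω => (t i).indicator (fun _ => (1 : ℝ)) ω) (B i) P := by
      exact hindep.comp
        (show Measurable ((S i).indicator fun _ => (1 : ℝ)) from
          measurable_const.indicator (hS i))
        (show Measurable (fun f : Fin N → ℝ => f i) from measurable_pi_apply i)
    have heq : ∀ ω, (t i).indicator (B i) ω =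
        (t i).indicator (fun _ => (1 : ℝ)) ω * B i ω := by
      intro ω
      by_cases h : ω ∈ t i <;> simp [Set.indicator, h]
    calc ∫ ω, (t i).indicator (B i) ω ∂P
        = ∫ ω, (t i).indicator (fun _ => (1 : ℝ)) ω * B i ω ∂P := by
          exact integral_congr_ae (Filter.Eventually.of_forall heq)
      _ = (∫ ω, (t i).indicator (fun _ => (1 : ℝ)) ω ∂P) * ∫ ω, B i ω ∂P :=
          hXY.integral_fun_mul_eq_mul_integral
            ((measurable_const.indicator (ht i)).aestronglyMeasurable)
            (hBmeas i).aestronglyMeasurable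
      _ = (P (t i)).toReal * μ i := by
          rw [hmean i, integral_indicator_const (1 : ℝ) (ht i)]
          simp [Measure.real]
  have hsum1 : ∑ i, (P (t i)).toReal = 1 := by
    have hae : ∀ᵐ ω ∂P, ω ∈ ⋃ i, t i := by
      filter_upwards [hmem] with ω hω
      exact Set.mem_iUnion.2 ⟨_, hω⟩
    have hU : P (⋃ i, t i) = 1 := by
      rw [← prob_compl_eq_zero_iff (MeasurableSet.iUnion ht)]
      rw [MeasureTheory.ae_iff] at hae
      exact hae
    calc ∑ i, (P (t i)).toReal
        = (∑ i, P (t i)).toReal := (ENNReal.toReal_sum fun i _ => measure_ne_top P _).symm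
      _ = 1 := by rw [← tsum_fintype (L := SummationFilter.unconditional _), ← measure_iUnion hdisj ht, hU]; simp
  calc ∫ ω, B (aStar A ω) ω ∂P
      = ∫ ω, ∑ i, (t i).indicator (B i) ω ∂P := integral_congr_ae key
    _ = ∑ i, ∫ ω, (t i).indicator (B i) ω ∂P :=
        integral_finset_sum _ (fun i _ => hIndInt i)
    _ = ∑ i, (P (t i)).toReal * μ i := by simp_rw [hmul]
    _ ≤ ∑ i, (P (t i)).toReal * M := by
        refine Finset.sum_le_sum fun i _ => ?_
        exact mul_le_mul_of_nonneg_left (Finset.le_sup' μ (Finset.mem_univ i))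
          ENNReal.toReal_nonneg
    _ = (∑ i, (P (t i)).toReal) * M := by rw [← Finset.sum_mul]
    _ = M := by rw [hsum1, one_mul]
end

section
/- (Underestimation of the clipped double estimator) Suppose additionally that the σ-algebra generated by (μ̂^A_1,…,μ̂^A_N) is independent of the σ-algebra generated by (μ̂^B_1,…,μ̂^B_N), and that E[μ̂^B_i] = μ_i for each i. Then E[μ̂*_CDE] ≤ E[μ̂*_DE] ≤ max_{1≤i≤N} μ_i; i.e., the clipped double estimator underestimates the maximum expected value at least as much as the double estimator does. -/
open MeasureTheory ProbabilityTheory Finset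

theorem stmt4 {Ω : Type*} [MeasurableSpace Ω] (P : MeasureTheory.Measure Ω)
    [MeasureTheory.IsProbabilityMeasure P]
    (N : ℕ) [NeZero N] (hN : 2 ≤ N)
    (A B C : Fin N → Ω → ℝ)
    (hAmeas : ∀ i, Measurable (A i)) (hBmeas : ∀ i, Measurable (B i))
    (hCmeas : ∀ i, Measurable (C i))
    (hAint : ∀ i, MeasureTheory.Integrable (A i) P)
    (hBint : ∀ i, MeasureTheory.Integrable (B i) P)
    (hCint : ∀ i, MeasureTheory.Integrable (C i) P)
    (hAdist : ∀ᵐ ω ∂P, Function.Injective fun i => A i ω)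
    (hBdist : ∀ᵐ ω ∂P, Function.Injective fun i => B i ω)
    (hindep : ProbabilityTheory.IndepFun (fun ω i => A i ω) (fun ω i => B i ω) P)
    (μ : Fin N → ℝ) (hmean : ∀ i, ∫ ω, B i ω ∂P = μ i) :
    (∫ ω, min (B (aStar A ω) ω) (maxOf C ω) ∂P ≤ ∫ ω, B (aStar A ω) ω ∂P) ∧
      ∫ ω, B (aStar A ω) ω ∂P ≤ Finset.univ.sup' Finset.univ_nonempty μ := by

  classical
  -- setup
  have hne : (Finset.univ : Finset (Fin N)).Nonempty := Finset.univ_nonempty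
  set φ : Ω → (Fin N → ℝ) := fun ω i => A i ω with hφ
  have hφmeas : Measurable φ := measurable_pi_lambda _ hAmeas
  set S : Fin N → Set (Fin N → ℝ) := fun i => {v | ∀ j, v j ≤ v i} with hSdef
  have hSmeas : ∀ i, MeasurableSet (S i) := by
    intro i
    have : S i = ⋂ j, {v : Fin N → ℝ | v j ≤ v i} := by ext v; simp [hSdef]
    rw [this]
    exact MeasurableSet.iInter fun j =>
      measurableSet_le (measurable_pi_apply j) (measurable_pi_apply i)
  set f : Fin N → (Fin N → ℝ) → ℝ := fun i => (S i).indicator 1 with hfdef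
  have hfmeas : ∀ i, Measurable (f i) := fun i => measurable_const.indicator (hSmeas i)
  have hfbd : ∀ i v, ‖f i v‖ ≤ 1 := by
    intro i v
    rw [Real.norm_eq_abs]
    by_cases h : v ∈ S i <;> simp [hfdef, h]
  have hfnonneg : ∀ i v, 0 ≤ f i v := by
    intro i v
    by_cases h : v ∈ S i <;> simp [hfdef, h]
  -- aStar is a maximizer
  have hmaxpt : ∀ ω j, A j ω ≤ A (aStar A ω) ω := by
    intro ω j
    have hspec := (Finset.univ.exists_max_image (fun i => A i ω) hne).choose_spec
    have : aStar A ω = (Finset.univ.exists_max_image (fun i => A i ω) hne).choose := by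
      simp [aStar, argmaxOn, dif_pos hne]
    rw [this]
    exact hspec.2 j (Finset.mem_univ j)
  -- key pointwise identity on the injectivity event
  have hkey : ∀ᵐ ω ∂P, ∀ i, f i (φ ω) = if aStar A ω = i then 1 else 0 := by
    filter_upwards [hAdist] with ω hinj i
    by_cases h : aStar A ω = i
    · have hmem : φ ω ∈ S i := by
        intro j
        have := hmaxpt ω j
        simpa [hφ, ← h] using this
      simp [hfdef, Set.indicator_of_mem hmem, h]
    · have hnmem : φ ω ∉ S i := by
        intro hmem
        have h1 : A (aStar A ω) ω ≤ A i ω := hmem (aStar A ω)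
        have h2 : A i ω ≤ A (aStar A ω) ω := hmaxpt ω i
        exact h (hinj (le_antisymm h1 h2) : aStar A ω = i)
      simp [hfdef, Set.indicator_of_notMem hnmem, h]
  -- a.e. decomposition of B_{a*}
  have hBsum : (fun ω => B (aStar A ω) ω) =ᵐ[P] fun ω => ∑ i, f i (φ ω) * B i ω := by
    filter_upwards [hkey] with ω hω
    have : ∑ i, f i (φ ω) * B i ω = ∑ i, (if aStar A ω = i then B i ω else 0) := by
      refine Finset.sum_congr rfl fun i _ => ?_
      rw [hω i]; by_cases h : aStar A ω = i <;> simp [h]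
    rw [this, Finset.sum_ite_eq]
    simp
  have hsum1 : (fun ω => ∑ i, f i (φ ω)) =ᵐ[P] fun _ => (1 : ℝ) := by
    filter_upwards [hkey] with ω hω
    simp only [hω]
    rw [Finset.sum_ite_eq]
    simp
  -- integrability of the pieces
  have hgint : ∀ i, Integrable (fun ω => f i (φ ω) * B i ω) P := fun i =>
    (hBint i).bdd_mul ((hfmeas i).comp hφmeas).aestronglyMeasurable
      (Filter.Eventually.of_forall fun ω => hfbd i (φ ω))
  have hfint : ∀ i, Integrable (fun ω => f i (φ ω)) P := fun i =>
    (integrable_const (1 : ℝ)).bdd_mul ((hfmeas i).comp hφmeas).aestronglyMeasurable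
      (Filter.Eventually.of_forall fun ω => hfbd i (φ ω)) |>.congr
      (Filter.Eventually.of_forall fun ω => by simp)
  have hXint : Integrable (fun ω => B (aStar A ω) ω) P :=
    (integrable_finset_sum Finset.univ fun i _ => hgint i).congr hBsum.symm
  -- independence: f i ∘ φ is independent of B i
  have hindep' : ∀ i, IndepFun (fun ω => f i (φ ω)) (B i) P := fun i =>
    hindep.comp (hfmeas i) (measurable_pi_apply i)
  set p : Fin N → ℝ := fun i => ∫ ω, f i (φ ω) ∂P with hpdef
  have hpnonneg : ∀ i, 0 ≤ p i := fun i =>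
    integral_nonneg fun ω => hfnonneg i (φ ω)
  have hpsum : ∑ i, p i = 1 := by
    rw [hpdef, ← integral_finset_sum Finset.univ fun i _ => hfint i,
      integral_congr_ae hsum1]
    simp
  have hgval : ∀ i, ∫ ω, f i (φ ω) * B i ω ∂P = p i * μ i := by
    intro i
    have := (hindep' i).integral_mul_eq_mul_integral ((hfmeas i).comp hφmeas).aestronglyMeasurable
      (hBmeas i).aestronglyMeasurable
    rw [← hmean i, hpdef]
    exact this
  have hBval : ∫ ω, B (aStar A ω) ω ∂P = ∑ i, p i * μ i := by
    rw [integral_congr_ae hBsum, integral_finset_sum Finset.univ fun i _ => hgint i]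
    exact Finset.sum_congr rfl fun i _ => hgval i
  constructor
  · -- min ≤ first component
    have hMint : Integrable (maxOf C) P := by
      have main : ∀ (s : Finset (Fin N)) (hs : s.Nonempty),
          Integrable (fun ω => s.sup' hs fun i => C i ω) P := by
        intro s hs
        induction hs using Finset.Nonempty.cons_induction with
        | singleton i => simpa using hCint i
        | cons i s hi hs ih =>
            simp only [Finset.sup'_cons hs]
            exact (hCint i).sup ih
      exact (main Finset.univ hne).congr (Filter.Eventually.of_forall fun ω => rfl)
    have hminint : Integrable (fun ω => min (B (aStar A ω) ω) (maxOf C ω)) P := by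
      have := hXint.inf hMint
      exact this.congr (Filter.Eventually.of_forall fun ω => rfl)
    exact integral_mono_ae hminint hXint
      (Filter.Eventually.of_forall fun ω => min_le_left _ _)
  · -- second component bound
    rw [hBval]
    calc ∑ i, p i * μ i
        ≤ ∑ i, p i * (Finset.univ.sup' Finset.univ_nonempty μ) := by
          refine Finset.sum_le_sum fun i _ => ?_
          exact mul_le_mul_of_nonneg_left (Finset.le_sup' μ (Finset.mem_univ i)) (hpnonneg i)
      _ = Finset.univ.sup' Finset.univ_nonempty μ := by
          rw [← Finset.sum_mul, hpsum, one_mul]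
end

section
/- (Upper bound on the single estimator, Eq. (12)) Let μ̂_1,…,μ̂_N (N ≥ 2) be square-integrable real-valued random variables on a common probability space with E[μ̂_i] = μ_i, and set μ* := max_{1≤i≤N} μ_i. Then E[max_{1≤i≤N} μ̂_i] ≤ μ* + sqrt( ((N−1)/N) · Σ_{i=1}^N Var[μ̂_i] ). -/
open MeasureTheory ProbabilityTheory Finset

section Aux

lemma samuelson_aux {N : ℕ} (hN : 2 ≤ N) (y : Fin N → ℝ) (i0 : Fin N) :
    y i0 - (∑ i, y i) / N ≤ Real.sqrt (((N - 1 : ℝ) / N) * ∑ i, y i ^ 2) := by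
  have hn : (2:ℝ) ≤ (N:ℝ) := by exact_mod_cast hN
  have hn0 : (0:ℝ) < N := by linarith
  set a : ℝ := (∑ i, y i) / N with ha
  set z : Fin N → ℝ := fun i => y i - a with hz
  have hsum : ∑ i, y i = N * a := by rw [ha, mul_div_assoc', mul_div_cancel_left₀ _ hn0.ne']
  have hsz : ∑ i, z i = 0 := by
    simp only [hz, Finset.sum_sub_distrib, Finset.sum_const, Finset.card_univ, Fintype.card_fin,
      nsmul_eq_mul, hsum]
    ring
  have herase : ∑ i ∈ univ.erase i0, z i = - z i0 := by
    have := Finset.sum_erase_add univ z (mem_univ i0)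
    linarith [this.symm ▸ hsz]
  have hcard : ((univ.erase i0).card : ℝ) = (N : ℝ) - 1 := by
    rw [Finset.card_erase_of_mem (mem_univ i0)]
    simp [Finset.card_univ]
    have : 1 ≤ N := by omega
    push_cast [Nat.cast_sub this]
    ring
  have hCS := Finset.sum_mul_sq_le_sq_mul_sq (univ.erase i0) z (fun _ => (1:ℝ))
  simp only [mul_one, one_pow, Finset.sum_const, nsmul_eq_mul] at hCS
  rw [herase] at hCS
  have hzsq : ∑ i ∈ univ.erase i0, z i ^ 2 = (∑ i, z i ^ 2) - z i0 ^ 2 := by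
    have := Finset.sum_erase_add univ (fun i => z i ^ 2) (mem_univ i0)
    linarith
  have hkey : (N:ℝ) * z i0 ^ 2 ≤ ((N:ℝ) - 1) * ∑ i, z i ^ 2 := by
    rw [hzsq] at hCS
    rw [hcard] at hCS
    nlinarith [hCS]
  have hzy : ∑ i, z i ^ 2 = (∑ i, y i ^ 2) - N * a ^ 2 := by
    simp only [hz, sub_sq]
    rw [Finset.sum_add_distrib, Finset.sum_sub_distrib]
    have h1 : ∑ i : Fin N, 2 * y i * a = 2 * a * ∑ i, y i := by
      rw [Finset.mul_sum]; congr 1; ext i; ring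
    have h2 : ∑ _i : Fin N, a ^ 2 = (N:ℝ) * a ^ 2 := by
      simp [Finset.card_univ]
    rw [h1, h2, hsum]
    ring
  have hzle : ∑ i, z i ^ 2 ≤ ∑ i, y i ^ 2 := by nlinarith [sq_nonneg a]
  have hfin : z i0 ^ 2 ≤ ((N:ℝ) - 1) / N * ∑ i, y i ^ 2 := by
    rw [div_mul_eq_mul_div, le_div_iff₀ hn0]
    nlinarith [hkey, hzle]
  calc y i0 - a = z i0 := rfl
    _ ≤ |z i0| := le_abs_self _
    _ = Real.sqrt (z i0 ^ 2) := (Real.sqrt_sq_eq_abs _).symm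
    _ ≤ _ := Real.sqrt_le_sqrt hfin

lemma maxOf_measurable' {Ω : Type*} [MeasurableSpace Ω] {N : ℕ} [NeZero N]
    (C : Fin N → Ω → ℝ) (hmeas : ∀ i, Measurable (C i)) : Measurable (maxOf C) := by
  have : maxOf C = Finset.univ.sup' Finset.univ_nonempty C := by
    funext ω; rw [Finset.sup'_apply]; rfl
  rw [this]
  exact Finset.measurable_sup' _ fun i _ => hmeas i

lemma maxOf_memLp' {Ω : Type*} [MeasurableSpace Ω] (P : Measure Ω) [IsFiniteMeasure P]
    {N : ℕ} [NeZero N] (C : Fin N → Ω → ℝ)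
    (hmeas : ∀ i, Measurable (C i)) (h2 : ∀ i, MemLp (C i) 2 P) :
    MemLp (maxOf C) 2 P := by
  have hD2 : MemLp (fun ω => ∑ i, ‖C i ω‖) 2 P := by
    have h := memLp_finset_sum' (μ := P) (p := 2) Finset.univ
      (f := fun i ω => ‖C i ω‖) (fun i _ => (h2 i).norm)
    have : (∑ i : Fin N, fun ω => ‖C i ω‖) = fun ω => ∑ i, ‖C i ω‖ := by
      funext ω; simp
    rwa [this] at h
  refine hD2.of_le (maxOf_measurable' C hmeas).aestronglyMeasurable
    (Filter.Eventually.of_forall fun ω => ?_)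
  obtain ⟨i0, _, hi0⟩ := Finset.exists_mem_eq_sup' (Finset.univ_nonempty (α := Fin N))
    (fun i => C i ω)
  have h1 : ‖maxOf C ω‖ ≤ ‖C i0 ω‖ := by
    rw [maxOf, hi0]
  have h2' : ‖C i0 ω‖ ≤ ∑ i, ‖C i ω‖ :=
    Finset.single_le_sum (f := fun i => ‖C i ω‖) (fun i _ => norm_nonneg _) (Finset.mem_univ i0)
  calc ‖maxOf C ω‖ ≤ ∑ i, ‖C i ω‖ := h1.trans h2'
    _ ≤ ‖∑ i, ‖C i ω‖‖ := le_abs_self _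

end Aux


theorem stmt14 {Ω : Type*} [MeasurableSpace Ω] (P : MeasureTheory.Measure Ω)
    [MeasureTheory.IsProbabilityMeasure P]
    (N : ℕ) [NeZero N] (hN : 2 ≤ N)
    (C : Fin N → Ω → ℝ)
    (hCmeas : ∀ i, Measurable (C i))
    (hC2 : ∀ i, MeasureTheory.MemLp (C i) 2 P)
    (μ : Fin N → ℝ) (hmean : ∀ i, ∫ ω, C i ω ∂P = μ i) :
    ∫ ω, maxOf C ω ∂P ≤
      Finset.univ.sup' Finset.univ_nonempty μ +
        Real.sqrt (((N - 1 : ℝ) / N) * ∑ i, ProbabilityTheory.variance (C i) P) := by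
  classical
  have hn : (2:ℝ) ≤ (N:ℝ) := by exact_mod_cast hN
  have hn0 : (0:ℝ) < (N:ℝ) := by linarith
  set μs : ℝ := Finset.univ.sup' Finset.univ_nonempty μ with hμs
  set Y : Fin N → Ω → ℝ := fun i ω => C i ω - μ i with hYdef
  have hYmeas : ∀ i, Measurable (Y i) := fun i => (hCmeas i).sub measurable_const
  have hY2 : ∀ i, MemLp (Y i) 2 P := fun i => (hC2 i).sub (memLp_const _)
  have hYint : ∀ i, Integrable (Y i) P := fun i => (hY2 i).integrable one_le_two
  have hCint : ∀ i, Integrable (C i) P := fun i => (hC2 i).integrable one_le_two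
  have hYmean : ∀ i, ∫ ω, Y i ω ∂P = 0 := by
    intro i
    simp only [hYdef]
    rw [integral_sub (hCint i) (integrable_const _), hmean i]
    simp
  set M : Ω → ℝ := maxOf Y with hMdef
  have hMmeas : Measurable M := maxOf_measurable' Y hYmeas
  have hM2 : MemLp M 2 P := maxOf_memLp' P Y hYmeas hY2
  -- the average
  set A : Ω → ℝ := fun ω => (∑ i, Y i ω) / N with hAdef
  have hS2 : MemLp (fun ω => ∑ i, Y i ω) 2 P := by
    have h := memLp_finset_sum' (μ := P) (p := 2) Finset.univ
      (f := fun i ω => Y i ω) (fun i _ => hY2 i)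
    have : (∑ i : Fin N, fun ω => Y i ω) = fun ω => ∑ i, Y i ω := by
      funext ω; simp
    rwa [this] at h
  have hA2 : MemLp A 2 P := by
    have := hS2.const_mul ((N:ℝ)⁻¹)
    have heq : (fun ω => (N:ℝ)⁻¹ * ∑ i, Y i ω) = A := by
      funext ω; rw [hAdef]; ring
    rwa [heq] at this
  have hAmean : ∫ ω, A ω ∂P = 0 := by
    simp only [hAdef, div_eq_inv_mul]
    rw [integral_const_mul, integral_finset_sum _ (fun i _ => hYint i)]
    simp [hYmean]
  -- X = M - A
  set X : Ω → ℝ := fun ω => M ω - A ω with hXdef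
  have hX2 : MemLp X 2 P := hM2.sub hA2
  have hXnonneg : ∀ ω, 0 ≤ X ω := by
    intro ω
    have h1 : ∑ i, Y i ω ≤ (N:ℝ) * M ω := by
      calc ∑ i, Y i ω ≤ ∑ _i : Fin N, M ω :=
            Finset.sum_le_sum fun i _ => Finset.le_sup' (fun j => Y j ω) (Finset.mem_univ i)
        _ = (N:ℝ) * M ω := by simp [Finset.card_univ]
    have : A ω ≤ M ω := by
      rw [hAdef]
      rw [div_le_iff₀ hn0]
      linarith
    simp only [hXdef]; linarith
  set g : Ω → ℝ := fun ω => ((N:ℝ) - 1) / N * ∑ i, Y i ω ^ 2 with hgdef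
  have hgnonneg : ∀ ω, 0 ≤ g ω := by
    intro ω
    apply mul_nonneg (div_nonneg (by linarith) hn0.le)
    exact Finset.sum_nonneg fun i _ => sq_nonneg _
  have hXle : ∀ ω, X ω ≤ Real.sqrt (g ω) := by
    intro ω
    obtain ⟨i0, _, hi0⟩ := Finset.exists_mem_eq_sup' (Finset.univ_nonempty (α := Fin N))
      (fun i => Y i ω)
    have : M ω = Y i0 ω := hi0
    simp only [hXdef, hAdef, hgdef, this]
    exact samuelson_aux hN (fun i => Y i ω) i0
  have hXsq : ∀ ω, X ω ^ 2 ≤ g ω := by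
    intro ω
    have := pow_le_pow_left₀ (hXnonneg ω) (hXle ω) 2
    rwa [Real.sq_sqrt (hgnonneg ω)] at this
  -- integrability of squares
  have hX2int : Integrable (fun ω => X ω ^ 2) P := hX2.integrable_sq
  have hgint : Integrable g P := by
    apply Integrable.const_mul
    exact integrable_finset_sum _ fun i _ => (hY2 i).integrable_sq
  have hEX2 : ∫ ω, X ω ^ 2 ∂P ≤ ∫ ω, g ω ∂P :=
    integral_mono hX2int hgint hXsq
  have hEg : ∫ ω, g ω ∂P = ((N:ℝ) - 1) / N * ∑ i, variance (C i) P := by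
    simp only [hgdef]
    rw [integral_const_mul, integral_finset_sum _ (fun i _ => (hY2 i).integrable_sq)]
    congr 1
    apply Finset.sum_congr rfl
    intro i _
    rw [variance_eq_integral (hC2 i).aestronglyMeasurable.aemeasurable, hmean i]
  have hEXnn : 0 ≤ ∫ ω, X ω ∂P := integral_nonneg hXnonneg
  have hEXsqrt : ∫ ω, X ω ∂P ≤ Real.sqrt (∫ ω, X ω ^ 2 ∂P) := by
    have hv := variance_nonneg X P
    rw [variance_eq_sub hX2] at hv
    simp only [Pi.pow_apply] at hv
    calc ∫ ω, X ω ∂P = Real.sqrt ((∫ ω, X ω ∂P) ^ 2) := (Real.sqrt_sq hEXnn).symm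
      _ ≤ Real.sqrt (∫ ω, X ω ^ 2 ∂P) := Real.sqrt_le_sqrt (by linarith)
  have hEM : ∫ ω, M ω ∂P = ∫ ω, X ω ∂P := by
    simp only [hXdef]
    rw [integral_sub (hM2.integrable one_le_two) (hA2.integrable one_le_two), hAmean]
    ring
  -- final pointwise bound
  have hptwise : ∀ ω, maxOf C ω ≤ μs + M ω := by
    intro ω
    apply Finset.sup'_le
    intro i _
    have h1 : Y i ω ≤ M ω := Finset.le_sup' (fun j => Y j ω) (Finset.mem_univ i)
    have h2 : μ i ≤ μs := Finset.le_sup' μ (Finset.mem_univ i)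
    have : C i ω = Y i ω + μ i := by simp [hYdef]
    linarith
  have hmaxint : Integrable (maxOf C) P :=
    (maxOf_memLp' P C hCmeas hC2).integrable one_le_two
  calc ∫ ω, maxOf C ω ∂P ≤ ∫ ω, (μs + M ω) ∂P :=
        integral_mono hmaxint ((integrable_const _).add (hM2.integrable one_le_two)) hptwise
    _ = μs + ∫ ω, M ω ∂P := by
        rw [integral_add (integrable_const _) (hM2.integrable one_le_two)]
        simp
    _ = μs + ∫ ω, X ω ∂P := by rw [hEM]
    _ ≤ μs + Real.sqrt (∫ ω, X ω ^ 2 ∂P) := by linarith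
    _ ≤ μs + Real.sqrt (((N:ℝ) - 1) / N * ∑ i, variance (C i) P) := by
        have : ∫ ω, X ω ^ 2 ∂P ≤ ((N:ℝ) - 1) / N * ∑ i, variance (C i) P := by
          rw [← hEg]; exact hEX2
        linarith [Real.sqrt_le_sqrt this]
    _ = _ := rfl
end

section
/- (Sandwich property) For every K with 1 ≤ K ≤ N, E[μ̂*_SE] ≥ E[min{μ̂^B_{a_K*}, μ̂*_SE}] ≥ E[μ̂*_CDE]; i.e., the expected value of the action candidate based clipped double estimator always lies between the expected values of the single estimator and of the clipped double estimator, so the number of candidates K controls the trade-off between the overestimation of the single estimator and the underestimation of the clipped double estimator. -/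
open MeasureTheory ProbabilityTheory Finset

lemma argmaxOn_spec {α : Type*} [Nonempty α] (f : α → ℝ) (s : Finset α) (h : s.Nonempty) :
    argmaxOn f s ∈ s ∧ ∀ b ∈ s, f b ≤ f (argmaxOn f s) := by
  rw [argmaxOn, dif_pos h]
  obtain ⟨hm, hle⟩ := (s.exists_max_image f h).choose_spec
  exact ⟨hm, hle⟩

open Classical in
noncomputable def gFun {Ω : Type*} {N : ℕ} [NeZero N] (A B C : Fin N → Ω → ℝ)
    (S : Ω → Finset (Fin N)) (ω : Ω) : ℝ :=
  ∑ i : Fin N, if (i ∈ S ω ∧ ∀ j ∈ S ω, A j ω ≤ A i ω) then min (B i ω) (maxOf C ω) else 0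

open Classical in
lemma gFun_eq {Ω : Type*} {N : ℕ} [NeZero N] (A B C : Fin N → Ω → ℝ)
    (S : Ω → Finset (Fin N)) (ω : Ω) (hinj : Function.Injective fun i => A i ω)
    (hS : (S ω).Nonempty) :
    gFun A B C S ω = min (B (argmaxOn (fun i => A i ω) (S ω)) ω) (maxOf C ω) := by
  set a := argmaxOn (fun i => A i ω) (S ω) with ha
  obtain ⟨ham, hamax⟩ := argmaxOn_spec (fun i => A i ω) (S ω) hS
  rw [gFun, Finset.sum_eq_single a]
  · rw [if_pos ⟨ham, hamax⟩]
  · intro i _ hia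
    rw [if_neg]
    rintro ⟨him, himax⟩
    exact hia (hinj (le_antisymm (hamax i him) (himax a ham)))
  · intro h; exact absurd (Finset.mem_univ a) h

lemma maxOf_meas {Ω : Type*} [MeasurableSpace Ω] {N : ℕ} [NeZero N] {C : Fin N → Ω → ℝ}
    (hC : ∀ i, Measurable (C i)) : Measurable (maxOf C) := by
  have : maxOf C = Finset.univ.sup' Finset.univ_nonempty fun i (ω : Ω) => C i ω := by
    ext ω; rw [maxOf]; exact (Finset.sup'_apply _ _ _).symm
  rw [this]
  exact Finset.measurable_sup' Finset.univ_nonempty fun i _ => hC i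

lemma maxOf_int {Ω : Type*} [MeasurableSpace Ω] {P : Measure Ω} {N : ℕ} [NeZero N]
    {C : Fin N → Ω → ℝ} (hC : ∀ i, Measurable (C i)) (hCi : ∀ i, Integrable (C i) P) :
    Integrable (maxOf C) P := by
  refine Integrable.mono' (integrable_finset_sum Finset.univ fun i _ => (hCi i).abs)
    ((maxOf_meas hC).aestronglyMeasurable) (Filter.Eventually.of_forall fun ω => ?_)
  rw [Real.norm_eq_abs, abs_le]
  constructor
  · obtain ⟨i, -, hi⟩ := Finset.exists_mem_eq_sup' (Finset.univ_nonempty (α := Fin N))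
      fun i => C i ω
    calc -(∑ j : Fin N, |C j ω|) ≤ -|C i ω| := by
          apply neg_le_neg
          exact Finset.single_le_sum (f := fun j => |C j ω|) (fun j _ => abs_nonneg _)
            (Finset.mem_univ i)
        _ ≤ C i ω := neg_abs_le _
        _ = maxOf C ω := hi.symm
  · obtain ⟨i, -, hi⟩ := Finset.exists_mem_eq_sup' (Finset.univ_nonempty (α := Fin N))
      fun i => C i ω
    calc maxOf C ω = C i ω := hi
      _ ≤ |C i ω| := le_abs_self _
      _ ≤ ∑ j : Fin N, |C j ω| := Finset.single_le_sum (f := fun j => |C j ω|)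
            (fun j _ => abs_nonneg _) (Finset.mem_univ i)

open Classical in
lemma gFun_meas {Ω : Type*} [MeasurableSpace Ω] {N : ℕ} [NeZero N]
    {A B C : Fin N → Ω → ℝ} (hA : ∀ i, Measurable (A i)) (hB : ∀ i, Measurable (B i))
    (hC : ∀ i, Measurable (C i)) {S : Ω → Finset (Fin N)}
    (hS : ∀ i, MeasurableSet {ω | i ∈ S ω}) :
    Measurable (gFun A B C S) := by
  refine Finset.measurable_sum Finset.univ fun i _ => Measurable.ite ?_
    ((hB i).min (maxOf_meas hC)) measurable_const
  have : {ω | i ∈ S ω ∧ ∀ j ∈ S ω, A j ω ≤ A i ω} =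
      {ω | i ∈ S ω} ∩ ⋂ j : Fin N, ({ω | j ∈ S ω}ᶜ ∪ {ω | A j ω ≤ A i ω}) := by
    ext ω
    simp only [Set.mem_inter_iff, Set.mem_setOf_eq, Set.mem_iInter, Set.mem_union,
      Set.mem_compl_iff]
    constructor
    · rintro ⟨h1, h2⟩; exact ⟨h1, fun j => or_iff_not_imp_left.2 fun hj =>
        h2 j (not_not.mp hj)⟩
    · rintro ⟨h1, h2⟩; exact ⟨h1, fun j hj => (h2 j).resolve_left (not_not.mpr hj)⟩
  rw [show {a | i ∈ S a ∧ ∀ j ∈ S a, A j a ≤ A i a} =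
      {ω | i ∈ S ω ∧ ∀ j ∈ S ω, A j ω ≤ A i ω} from rfl, this]
  exact (hS i).inter (MeasurableSet.iInter fun j =>
    ((hS j).compl.union (measurableSet_le (hA j) (hA i))))

open Classical in
lemma gFun_int {Ω : Type*} [MeasurableSpace Ω] {P : Measure Ω} {N : ℕ} [NeZero N]
    {A B C : Fin N → Ω → ℝ} (hA : ∀ i, Measurable (A i)) (hB : ∀ i, Measurable (B i))
    (hC : ∀ i, Measurable (C i)) (hBi : ∀ i, Integrable (B i) P)
    (hCi : ∀ i, Integrable (C i) P) {S : Ω → Finset (Fin N)}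
    (hS : ∀ i, MeasurableSet {ω | i ∈ S ω}) :
    Integrable (gFun A B C S) P := by
  have hmin : ∀ i : Fin N, Integrable (fun ω => min (B i ω) (maxOf C ω)) P :=
    fun i => (hBi i).inf (maxOf_int hC hCi)
  refine Integrable.mono' (integrable_finset_sum Finset.univ fun i _ => (hmin i).abs)
    (gFun_meas hA hB hC hS).aestronglyMeasurable (Filter.Eventually.of_forall fun ω => ?_)
  rw [Real.norm_eq_abs, gFun]
  refine le_trans (Finset.abs_sum_le_sum_abs _ _) (Finset.sum_le_sum fun i _ => ?_)
  split_ifs with h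
  · exact le_refl _
  · simp [abs_nonneg]

lemma topK_mem_meas {Ω : Type*} [MeasurableSpace Ω] {N : ℕ} {B : Fin N → Ω → ℝ}
    (hB : ∀ i, Measurable (B i)) (K : ℕ) (i : Fin N) :
    MeasurableSet {ω | i ∈ topK B K ω} := by
  classical
  have hc : Measurable fun ω => (Finset.univ.filter fun j => B i ω < B j ω).card := by
    have : (fun ω => (Finset.univ.filter fun j => B i ω < B j ω).card) =
        fun ω => ∑ j : Fin N, if B i ω < B j ω then 1 else 0 := by
      ext ω; rw [Finset.card_filter]
    rw [this]
    exact Finset.measurable_sum Finset.univ fun j _ =>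
      Measurable.ite (measurableSet_lt (hB i) (hB j)) measurable_const measurable_const
  have : {ω | i ∈ topK B K ω} =
      (fun ω => (Finset.univ.filter fun j => B i ω < B j ω).card) ⁻¹' {n | n < K} := by
    ext ω; simp [topK]
  rw [this]
  exact hc (measurableSet_lt measurable_id measurable_const)

lemma B_aStar_le {Ω : Type*} {N : ℕ} [NeZero N] (A B : Fin N → Ω → ℝ) {K : ℕ} (hK : 1 ≤ K)
    (ω : Ω) (hinj : Function.Injective fun i => A i ω) :
    B (aStar A ω) ω ≤ B (aK A B K ω) ω := by
  classical
  obtain ⟨ham, hamax⟩ := argmaxOn_spec (fun i => A i ω) Finset.univ Finset.univ_nonempty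
  obtain ⟨hbm, hbmax⟩ := argmaxOn_spec (fun i => A i ω) (topK B K ω) (topK_nonempty B hK ω)
  set a := argmaxOn (fun i => A i ω) Finset.univ with ha
  set b := argmaxOn (fun i => A i ω) (topK B K ω) with hb
  show B (aStar A ω) ω ≤ B (aK A B K ω) ω
  rw [aStar, aK, ← ha, ← hb]
  by_contra h
  push_neg at h
  have hbK : (Finset.univ.filter fun j => B b ω < B j ω).card < K := by
    simpa [topK] using hbm
  have haK : a ∈ topK B K ω := by
    simp only [topK, Finset.mem_filter, Finset.mem_univ, true_and]
    refine lt_of_le_of_lt (Finset.card_le_card fun j hj => ?_) hbK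
    simp only [Finset.mem_filter, Finset.mem_univ, true_and] at hj ⊢
    exact lt_trans h hj
  have hab : a = b := hinj (le_antisymm (hbmax a haK) (hamax b (Finset.mem_univ b)))
  rw [hab] at h
  exact lt_irrefl _ h

theorem stmt15 {Ω : Type*} [MeasurableSpace Ω] (P : MeasureTheory.Measure Ω)
    [MeasureTheory.IsProbabilityMeasure P]
    (N : ℕ) [NeZero N] (hN : 2 ≤ N)
    (A B C : Fin N → Ω → ℝ)
    (hAmeas : ∀ i, Measurable (A i)) (hBmeas : ∀ i, Measurable (B i))
    (hCmeas : ∀ i, Measurable (C i))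
    (hAint : ∀ i, MeasureTheory.Integrable (A i) P)
    (hBint : ∀ i, MeasureTheory.Integrable (B i) P)
    (hCint : ∀ i, MeasureTheory.Integrable (C i) P)
    (hAdist : ∀ᵐ ω ∂P, Function.Injective fun i => A i ω)
    (hBdist : ∀ᵐ ω ∂P, Function.Injective fun i => B i ω)
    :
    ∀ K, 1 ≤ K → K ≤ N →
      (∫ ω, min (B (aK A B K ω) ω) (maxOf C ω) ∂P ≤ ∫ ω, maxOf C ω ∂P) ∧
      ∫ ω, min (B (aStar A ω) ω) (maxOf C ω) ∂P ≤
        ∫ ω, min (B (aK A B K ω) ω) (maxOf C ω) ∂P := by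
  classical
  intro K hK1 hKN
  have hmemK : ∀ i, MeasurableSet {ω | i ∈ topK B K ω} := topK_mem_meas hBmeas K
  have hmemU : ∀ i : Fin N,
      MeasurableSet {ω : Ω | i ∈ (Finset.univ : Finset (Fin N))} := fun i => by simp
  have hgKint : Integrable (gFun A B C (topK B K)) P :=
    gFun_int hAmeas hBmeas hCmeas hBint hCint hmemK
  have hgSint : Integrable (gFun A B C fun _ => (Finset.univ : Finset (Fin N))) P :=
    gFun_int hAmeas hBmeas hCmeas hBint hCint hmemU
  have heqK : (fun ω => min (B (aK A B K ω) ω) (maxOf C ω)) =ᵐ[P] gFun A B C (topK B K) := by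
    filter_upwards [hAdist] with ω hinj
    exact (gFun_eq A B C _ ω hinj (topK_nonempty B hK1 ω)).symm
  have heqS : (fun ω => min (B (aStar A ω) ω) (maxOf C ω)) =ᵐ[P]
      gFun A B C fun _ => (Finset.univ : Finset (Fin N)) := by
    filter_upwards [hAdist] with ω hinj
    exact (gFun_eq A B C (fun _ => Finset.univ) ω hinj Finset.univ_nonempty).symm
  rw [integral_congr_ae heqK, integral_congr_ae heqS]
  constructor
  · refine integral_mono_ae hgKint (maxOf_int hCmeas hCint) ?_
    filter_upwards [hAdist] with ω hinj
    rw [gFun_eq A B C _ ω hinj (topK_nonempty B hK1 ω)]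
    exact min_le_right _ _
  · refine integral_mono_ae hgSint hgKint ?_
    filter_upwards [hAdist] with ω hinj
    rw [gFun_eq A B C (fun _ => Finset.univ) ω hinj Finset.univ_nonempty,
      gFun_eq A B C _ ω hinj (topK_nonempty B hK1 ω)]
    exact min_le_min (B_aStar_le A B hK1 ω hinj) le_rfl
end
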